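/- arXiv:1302.5226 — 5 statements merged into one kernel-verified Lean document; each statement's English description precedes it below -/
import Mathlib

section
/- For every x ∈ X, the Hopf oscillation seminorm equals twice the quotient norm of Thompson's norm modulo the line ℝe: ‖x‖_H = 2 · inf_{λ ∈ ℝ} ‖x + λe‖_T. -/
noncomputable section

/-- `M(x/y) = inf {t : ℝ | x ≤ t • y}`, where `x ≤ z` means `z - x ∈ C`. -/
def upSlope {X : Type*} [AddCommGroup X] [Module ℝ X] (C : Set X) (y x : X) : ℝ :=
  sInf {t : ℝ | t • y - x ∈ C}

/-- `m(x/y) = sup {t : ℝ | t • y ≤ x}`, where `x ≤ z` means `z - x ∈ C`. -/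
def lowSlope {X : Type*} [AddCommGroup X] [Module ℝ X] (C : Set X) (y x : X) : ℝ :=
  sSup {t : ℝ | x - t • y ∈ C}

/-- Thompson's norm `‖x‖_T = max (M(x/e), -m(x/e))` with respect to the unit `e`. -/
def thompsonNorm {X : Type*} [AddCommGroup X] [Module ℝ X] (C : Set X) (e x : X) : ℝ :=
  max (upSlope C e x) (-(lowSlope C e x))

/-- Hopf's oscillation seminorm `‖x‖_H = M(x/e) - m(x/e)` with respect to the unit `e`. -/
def hopfOsc {X : Type*} [AddCommGroup X] [Module ℝ X] (C : Set X) (e x : X) : ℝ :=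
  upSlope C e x - lowSlope C e x

/-- The oscillation `ω(x/y) = M(x/y) - m(x/y)`. -/
def oscGen {X : Type*} [AddCommGroup X] [Module ℝ X] (C : Set X) (y x : X) : ℝ :=
  upSlope C y x - lowSlope C y x

/-- Hilbert's projective metric `d_H(x,y) = log (M(x/y) / m(x/y))`. -/
def hilbertDist {X : Type*} [AddCommGroup X] [Module ℝ X] (C : Set X) (x y : X) : ℝ :=
  Real.log (upSlope C y x / lowSlope C y x)

/-- The dual cone `C⋆ = {μ ∈ X⋆ : ⟨μ,x⟩ ≥ 0 ∀ x ∈ C}` inside the topological dual. -/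
def dualCone {X : Type*} [NormedAddCommGroup X] [NormedSpace ℝ X] (C : Set X) :
    Set (X →L[ℝ] ℝ) := {μ | ∀ x ∈ C, 0 ≤ μ x}

/-- The simplex `P(e) = {μ ∈ C⋆ : ⟨μ,e⟩ = 1}`. -/
def simplexSet {X : Type*} [NormedAddCommGroup X] [NormedSpace ℝ X] (C : Set X) (e : X) :
    Set (X →L[ℝ] ℝ) := {μ | μ ∈ dualCone C ∧ μ e = 1}

/-- The dual norm of Thompson's norm. -/
def dualTNorm {X : Type*} [NormedAddCommGroup X] [NormedSpace ℝ X] (C : Set X) (e : X)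
    (μ : X →L[ℝ] ℝ) : ℝ :=
  sSup {r : ℝ | ∃ x : X, thompsonNorm C e x ≤ 1 ∧ r = μ x}

/-- Disjointness `ν ⊥ π` of two elements of the simplex `P(e)`. -/
def disjointIn {X : Type*} [NormedAddCommGroup X] [NormedSpace ℝ X] (C : Set X) (e : X)
    (ν π : X →L[ℝ] ℝ) : Prop :=
  ∀ μ ∈ simplexSet C e, μ - (2:ℝ)⁻¹ • ν ∈ dualCone C → μ - (2:ℝ)⁻¹ • π ∈ dualCone C →
    μ = (2:ℝ)⁻¹ • (ν + π)

/-- The order interval `[0,e] = {x : 0 ≤ x ≤ e}`. -/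
def orderIntv {X : Type*} [AddCommGroup X] (C : Set X) (e : X) : Set X :=
  {x | x ∈ C ∧ e - x ∈ C}

/-- The operator (semi)norm of `T` with respect to Hopf's oscillation seminorms. -/
def opHNorm {X₁ : Type*} {X₂ : Type*} [NormedAddCommGroup X₁] [NormedSpace ℝ X₁]
    [NormedAddCommGroup X₂] [NormedSpace ℝ X₂] (C₁ : Set X₁) (e₁ : X₁) (C₂ : Set X₂) (e₂ : X₂)
    (T : X₁ →L[ℝ] X₂) : ℝ :=
  sSup {r : ℝ | ∃ z : X₁, hopfOsc C₁ e₁ z ≤ 1 ∧ r = hopfOsc C₂ e₂ (T z)}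

/-- `C` is a closed pointed convex cone. -/
def IsCPCone {X : Type*} [NormedAddCommGroup X] [NormedSpace ℝ X] (C : Set X) : Prop :=
  IsClosed C ∧ (∀ x ∈ C, ∀ y ∈ C, x + y ∈ C) ∧ (∀ t : ℝ, 0 ≤ t → ∀ x ∈ C, t • x ∈ C) ∧
    (∀ x ∈ C, -x ∈ C → x = 0)

/-- `C` is a normal cone: `0 ≤ x ≤ y` implies `‖x‖ ≤ K ‖y‖` for some `K > 0`. -/
def IsNormalCone {X : Type*} [NormedAddCommGroup X] [NormedSpace ℝ X] (C : Set X) : Prop :=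
  ∃ K > (0:ℝ), ∀ x y : X, x ∈ C → y - x ∈ C → ‖x‖ ≤ K * ‖y‖

/-- The contraction rate `h(L)` of the linear flow `ẋ = L(x)` in Hopf's oscillation seminorm. -/
def hFun {X : Type*} [NormedAddCommGroup X] [NormedSpace ℝ X] (C : Set X) (e : X)
    (L : X →L[ℝ] X) : ℝ :=
  - sInf {r : ℝ | ∃ ν ∈ Set.extremePoints ℝ (simplexSet C e),
      ∃ π ∈ Set.extremePoints ℝ (simplexSet C e),
      ∃ x ∈ Set.extremePoints ℝ (orderIntv C e),
        ν x + π (e - x) = 0 ∧ r = ν (L x) + π (L (e - x))}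

end

/-! The slopes `M(·/e)` and `m(·/e)` are translation-equivariant along `e`:
`M(x + λe) = M(x) + λ` and `m(x + λe) = m(x) + λ`. Hence `‖x + λe‖_T = max (M + λ, -m - λ)`
is the maximum of an increasing and a decreasing affine function of `λ`; its infimum is their
common value `(M - m) / 2` at the crossing point `λ = -(M + m) / 2`. -/

open Set Filter Topology

theorem iInf_max_add_sub (a b : ℝ) : ⨅ l : ℝ, max (a + l) (b - l) = (a + b) / 2 := by
  have hle : ∀ l : ℝ, (a + b) / 2 ≤ max (a + l) (b - l) := fun l => by
    linarith [le_max_left (a + l) (b - l), le_max_right (a + l) (b - l)]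
  refine le_antisymm ?_ (le_ciInf hle)
  calc ⨅ l : ℝ, max (a + l) (b - l)
      ≤ max (a + (b - a) / 2) (b - (b - a) / 2) := ciInf_le ⟨_, forall_mem_range.2 hle⟩ _
    _ = (a + b) / 2 := by ring_nf; exact max_self _

section Translation

variable {X : Type*} [AddCommGroup X] [Module ℝ X] {C : Set X} {e x : X}

theorem upSlope_add_smul (hne : {t : ℝ | t • e - x ∈ C}.Nonempty)
    (hbdd : BddBelow {t : ℝ | t • e - x ∈ C}) (l : ℝ) :
    upSlope C e (x + l • e) = upSlope C e x + l := by
  have hset :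
      {t : ℝ | t • e - (x + l • e) ∈ C} = OrderIso.addRight l '' {t | t • e - x ∈ C} := by
    ext t
    simp only [OrderIso.addRight_apply, image_add_right, preimage_ofPred_eq, mem_ofPred_eq]
    rw [add_smul, neg_smul]
    congr! 1
    abel
  rw [upSlope, hset, ← (OrderIso.addRight l).map_csInf' hne hbdd]
  rfl

theorem lowSlope_add_smul (hne : {t : ℝ | x - t • e ∈ C}.Nonempty)
    (hbdd : BddAbove {t : ℝ | x - t • e ∈ C}) (l : ℝ) :
    lowSlope C e (x + l • e) = lowSlope C e x + l := by
  have hset :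
      {t : ℝ | x + l • e - t • e ∈ C} = OrderIso.addRight l '' {t | x - t • e ∈ C} := by
    ext t
    simp only [OrderIso.addRight_apply, image_add_right, preimage_ofPred_eq, mem_ofPred_eq]
    rw [add_smul, neg_smul]
    congr! 1
    abel
  rw [lowSlope, hset, ← (OrderIso.addRight l).map_csSup' hne hbdd]
  rfl

end Translation

namespace ConvexCone

variable {X : Type*} [AddCommGroup X] [Module ℝ X] {K : ConvexCone ℝ X} {e : X}

theorem le_of_sub_smul_mem_of_smul_sub_mem (hK : K.Salient) (he : e ∈ K) (he0 : e ≠ 0)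
    {x : X} {s t : ℝ} (hs : x - s • e ∈ K) (ht : t • e - x ∈ K) : s ≤ t := by
  by_contra! hts
  have hpos : (t - s) • e ∈ K := by simpa [sub_smul] using K.add_mem hs ht
  have hneg : -((t - s) • e) ∈ K := by simpa [← neg_smul] using K.smul_mem (sub_pos.2 hts) he
  exact hK _ hpos (smul_ne_zero (sub_ne_zero.2 hts.ne) he0) hneg

variable [TopologicalSpace X] [IsTopologicalAddGroup X] [ContinuousSMul ℝ X]

theorem exists_smul_sub_mem (he : e ∈ interior (K : Set X)) (x : X) :
    ∃ t : ℝ, t • e - x ∈ K := by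
  have hnhds : ∀ᶠ r in 𝓝 (0 : ℝ), e - r • x ∈ K :=
    (continuous_const.sub (continuous_id.smul continuous_const)).continuousAt.preimage_mem_nhds
      (by simpa using mem_interior_iff_mem_nhds.1 he)
  obtain ⟨r, hr, hr0⟩ := ((hnhds.filter_mono nhdsWithin_le_nhds).and
    (self_mem_nhdsWithin (s := Ioi 0))).exists
  exact ⟨r⁻¹, by
    simpa [smul_sub, smul_smul, inv_mul_cancel₀ hr0.ne'] using K.smul_mem (inv_pos.2 hr0) hr⟩

theorem exists_sub_smul_mem (he : e ∈ interior (K : Set X)) (x : X) :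
    ∃ t : ℝ, x - t • e ∈ K := by
  obtain ⟨t, ht⟩ := K.exists_smul_sub_mem he (-x)
  exact ⟨-t, by simpa [sub_eq_add_neg, add_comm] using ht⟩

theorem mem_of_zero_mem_interior (h0 : (0 : X) ∈ interior (K : Set X)) (x : X) : x ∈ K := by
  simpa using K.exists_smul_sub_mem h0 (-x)

theorem thompsonNorm_add_smul (hK : K.Salient) (he : e ∈ interior (K : Set X)) (he0 : e ≠ 0)
    (x : X) (l : ℝ) :
    thompsonNorm K e (x + l • e) = max (upSlope K e x + l) (-lowSlope K e x - l) := by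
  obtain ⟨s, hs⟩ := K.exists_sub_smul_mem he x
  obtain ⟨t, ht⟩ := K.exists_smul_sub_mem he x
  have hle : ∀ {a b : ℝ}, x - a • e ∈ K → b • e - x ∈ K → a ≤ b :=
    K.le_of_sub_smul_mem_of_smul_sub_mem hK (interior_subset he) he0
  rw [thompsonNorm, upSlope_add_smul (C := (K : Set X)) ⟨t, ht⟩ ⟨s, fun _ => hle hs⟩ l,
    lowSlope_add_smul (C := (K : Set X)) ⟨s, hs⟩ ⟨t, fun _ h => hle h ht⟩ l, neg_add,
    sub_eq_add_neg]

end ConvexCone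

theorem hopf_oscillation_eq_two_mul_quotient_thompson_general
    {X : Type*} [NormedAddCommGroup X] [NormedSpace ℝ X]
    (C : Set X) (e : X) (hC : IsCPCone C)
    (he : e ∈ interior C) (x : X) :
    hopfOsc C e x = 2 * ⨅ l : ℝ, thompsonNorm C e (x + l • e) := by
  obtain ⟨-, hadd, hsmul, hpointed⟩ := hC
  let K : ConvexCone ℝ X := ⟨C, fun c hc y hy => hsmul c hc.le y hy, hadd⟩
  rcases eq_or_ne e 0 with rfl | he0
  · -- Then `C = X`, and every slope is the junk value `sInf univ = sSup univ = 0`.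
    have hmem : ∀ y, y ∈ C := K.mem_of_zero_mem_interior he
    simp [hopfOsc, thompsonNorm, upSlope, lowSlope, hmem]
  · have hK : K.Salient := fun y hy hy0 hny => hy0 (hpointed y hy hny)
    have hT : ∀ l : ℝ,
        thompsonNorm C e (x + l • e) = max (upSlope C e x + l) (-lowSlope C e x - l) :=
      K.thompsonNorm_add_smul hK he he0 x
    rw [funext hT, iInf_max_add_sub, hopfOsc]
    ring

theorem hopf_oscillation_eq_two_mul_quotient_thompson
    {X : Type*} [NormedAddCommGroup X] [NormedSpace ℝ X] [CompleteSpace X]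
    (C : Set X) (e : X) (hC : IsCPCone C) (hnormal : IsNormalCone C)
    (he : e ∈ interior C) (x : X) :
    hopfOsc C e x = 2 * ⨅ l : ℝ, thompsonNorm C e (x + l • e) :=
  hopf_oscillation_eq_two_mul_quotient_thompson_general C e hC he x
end

section
/- For every continuous linear functional μ ∈ X⋆ with ⟨μ,e⟩ = 0, the operator norm of μ with respect to Hopf's oscillation seminorm is half the dual Thompson norm: sup{⟨μ,x⟩ : x ∈ X, ‖x‖_H ≤ 1} = (1/2)‖μ‖_T⋆. Consequently the dual of the quotient Banach space (X/ℝe, ‖·‖_H) is isometric to the hyperplane {μ ∈ X⋆ : ⟨μ,e⟩ = 0} equipped with the norm (1/2)‖·‖_T⋆. -/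
/-!
Recentring `x` at the midpoint of `[m(x/e), M(x/e)]` and doubling it turns Hopf's seminorm into
Thompson's norm, `‖2x - (M(x/e) + m(x/e)) e‖_T = ‖x‖_H`, while `‖z‖_H ≤ 2 ‖z‖_T` for every `z`.
As `μ` vanishes on `e`, the values of `μ` on the unit ball of `‖·‖_H` are therefore exactly half
its values on the unit ball of `‖·‖_T`.
-/

open Set Filter Topology
open scoped Pointwise

namespace IsCPCone

variable {X : Type*} [NormedAddCommGroup X] [NormedSpace ℝ X] {C : Set X}

lemma add_mem (hC : IsCPCone C) {x y : X} (hx : x ∈ C) (hy : y ∈ C) : x + y ∈ C :=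
  hC.2.1 x hx y hy

lemma smul_mem (hC : IsCPCone C) {t : ℝ} (ht : 0 ≤ t) {x : X} (hx : x ∈ C) : t • x ∈ C :=
  hC.2.2.1 t ht x hx

lemma eq_zero_of_mem_of_neg_mem (hC : IsCPCone C) {x : X} (hx : x ∈ C) (hnx : -x ∈ C) :
    x = 0 :=
  hC.2.2.2 x hx hnx

lemma smul_mem_iff (hC : IsCPCone C) {t : ℝ} (ht : 0 < t) {x : X} : t • x ∈ C ↔ x ∈ C := by
  refine ⟨fun h => ?_, hC.smul_mem ht.le⟩
  simpa [inv_smul_smul₀ ht.ne'] using hC.smul_mem (inv_nonneg.2 ht.le) h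

variable {e : X}

lemma nonempty_setOf_smul_sub_mem (hC : IsCPCone C) (he : e ∈ interior C) (x : X) :
    {t : ℝ | t • e - x ∈ C}.Nonempty := by
  have hlim : Tendsto (fun t : ℝ => e - t • x) (𝓝[>] 0) (𝓝 e) := by
    simpa using (tendsto_const_nhds.sub (tendsto_id.smul_const x)).mono_left
      (nhdsWithin_le_nhds (a := (0 : ℝ)))
  obtain ⟨t, hmem, ht⟩ :=
    ((hlim.eventually (isOpen_interior.mem_nhds he)).and self_mem_nhdsWithin).exists
  refine ⟨t⁻¹, ?_⟩
  simpa [smul_sub, smul_smul, inv_mul_cancel₀ (ne_of_gt ht)] using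
    hC.smul_mem (inv_nonneg.2 (le_of_lt ht)) (interior_subset hmem)

lemma subsingleton_of_zero_mem_interior (hC : IsCPCone C) (h0 : (0 : X) ∈ interior C) :
    Subsingleton X := by
  refine subsingleton_of_forall_eq 0 fun x => hC.eq_zero_of_mem_of_neg_mem ?_ ?_
  · simpa using (hC.nonempty_setOf_smul_sub_mem h0 (-x)).choose_spec
  · simpa using (hC.nonempty_setOf_smul_sub_mem h0 x).choose_spec

lemma le_of_smul_sub_mem_of_sub_smul_mem (hC : IsCPCone C) (heC : e ∈ C) (he0 : e ≠ 0)
    {x : X} {s t : ℝ} (ht : t • e - x ∈ C) (hs : x - s • e ∈ C) : s ≤ t := by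
  by_contra! hts
  have hpos : (t - s) • e ∈ C := by simpa [sub_smul] using hC.add_mem ht hs
  have hneg : -((t - s) • e) ∈ C := by
    rw [← neg_smul]
    exact hC.smul_mem (by linarith) heC
  have := hC.eq_zero_of_mem_of_neg_mem hpos hneg
  exact he0 ((smul_eq_zero.1 this).resolve_left (sub_ne_zero.2 (ne_of_lt hts)))

lemma bddBelow_setOf_smul_sub_mem (hC : IsCPCone C) (he : e ∈ interior C) (he0 : e ≠ 0)
    (x : X) : BddBelow {t : ℝ | t • e - x ∈ C} := by
  obtain ⟨s, hs⟩ := hC.nonempty_setOf_smul_sub_mem he (-x)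
  refine ⟨-s, fun t ht => hC.le_of_smul_sub_mem_of_sub_smul_mem (interior_subset he) he0 ht ?_⟩
  simpa [add_comm] using hs

end IsCPCone

section Slopes

variable {X : Type*} [NormedAddCommGroup X] [NormedSpace ℝ X] {C : Set X} {e : X}

lemma lowSlope_eq_neg_upSlope_neg (x : X) : lowSlope C e x = -upSlope C e (-x) := by
  have hset : {t : ℝ | x - t • e ∈ C} = -{t : ℝ | t • e - -x ∈ C} := by
    ext t
    simp [sub_eq_add_neg, add_comm]
  rw [lowSlope, hset, Real.sSup_neg]
  rfl

lemma upSlope_add_smul_s2 (hC : IsCPCone C) (he : e ∈ interior C) (he0 : e ≠ 0) (x : X) (c : ℝ) :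
    upSlope C e (x + c • e) = upSlope C e x + c := by
  have hset : {t : ℝ | t • e - (x + c • e) ∈ C} = {t : ℝ | t • e - x ∈ C} + {c} := by
    ext t
    simp only [add_singleton, image_add_right, mem_preimage, mem_ofPred_eq, add_smul, neg_smul]
    rw [← sub_eq_add_neg, sub_sub, add_comm (c • e)]
  rw [upSlope, hset, csInf_add (hC.nonempty_setOf_smul_sub_mem he x)
    (hC.bddBelow_setOf_smul_sub_mem he he0 x) (singleton_nonempty c) bddBelow_singleton,
    csInf_singleton]
  rfl

lemma upSlope_smul (hC : IsCPCone C) {a : ℝ} (ha : 0 < a) (x : X) :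
    upSlope C e (a • x) = a * upSlope C e x := by
  have hset : {t : ℝ | t • e - a • x ∈ C} = a • {t : ℝ | t • e - x ∈ C} := by
    ext t
    rw [mem_smul_set_iff_inv_smul_mem₀ ha.ne', mem_ofPred_eq, mem_ofPred_eq, smul_eq_mul,
      ← hC.smul_mem_iff ha (x := (a⁻¹ * t) • e - x), smul_sub, smul_smul,
      mul_inv_cancel_left₀ ha.ne']
  rw [upSlope, hset, Real.sInf_smul_of_nonneg ha.le, smul_eq_mul]
  rfl

lemma lowSlope_add_smul_s2 (hC : IsCPCone C) (he : e ∈ interior C) (he0 : e ≠ 0) (x : X)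
    (c : ℝ) : lowSlope C e (x + c • e) = lowSlope C e x + c := by
  rw [lowSlope_eq_neg_upSlope_neg, lowSlope_eq_neg_upSlope_neg, neg_add, ← neg_smul,
    upSlope_add_smul_s2 hC he he0]
  ring

lemma lowSlope_smul (hC : IsCPCone C) {a : ℝ} (ha : 0 < a) (x : X) :
    lowSlope C e (a • x) = a * lowSlope C e x := by
  rw [lowSlope_eq_neg_upSlope_neg, lowSlope_eq_neg_upSlope_neg, ← smul_neg, upSlope_smul hC ha]
  ring

end Slopes

section Norms

variable {X : Type*} [NormedAddCommGroup X] [NormedSpace ℝ X] {C : Set X} {e : X}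

lemma hopfOsc_le_two_mul_thompsonNorm (x : X) : hopfOsc C e x ≤ 2 * thompsonNorm C e x := by
  have hup := le_max_left (upSlope C e x) (-lowSlope C e x)
  have hlow := le_max_right (upSlope C e x) (-lowSlope C e x)
  rw [hopfOsc, thompsonNorm]
  linarith

lemma hopfOsc_smul (hC : IsCPCone C) {a : ℝ} (ha : 0 < a) (x : X) :
    hopfOsc C e (a • x) = a * hopfOsc C e x := by
  rw [hopfOsc, hopfOsc, upSlope_smul hC ha, lowSlope_smul hC ha, mul_sub]

lemma thompsonNorm_two_smul_sub_smul (hC : IsCPCone C) (he : e ∈ interior C) (he0 : e ≠ 0)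
    (x : X) :
    thompsonNorm C e ((2 : ℝ) • x - (upSlope C e x + lowSlope C e x) • e) = hopfOsc C e x := by
  rw [sub_eq_add_neg, ← neg_smul, thompsonNorm, upSlope_add_smul_s2 hC he he0,
    lowSlope_add_smul_s2 hC he he0, upSlope_smul hC two_pos, lowSlope_smul hC two_pos, hopfOsc]
  ring_nf
  exact max_self _

lemma setOf_hopfOsc_le_one_eq_inv_two_smul (hC : IsCPCone C) (he : e ∈ interior C)
    (he0 : e ≠ 0) (μ : X →ₗ[ℝ] ℝ) (hμ : μ e = 0) :
    {r : ℝ | ∃ x : X, hopfOsc C e x ≤ 1 ∧ r = μ x} =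
      (2⁻¹ : ℝ) • {r : ℝ | ∃ x : X, thompsonNorm C e x ≤ 1 ∧ r = μ x} := by
  ext r
  rw [mem_smul_set_iff_inv_smul_mem₀ (by norm_num)]
  constructor
  · rintro ⟨x, hx, rfl⟩
    refine ⟨_, (thompsonNorm_two_smul_sub_smul hC he he0 x).le.trans hx, ?_⟩
    simp [hμ]
  · rintro ⟨z, hz, hrz⟩
    refine ⟨(2⁻¹ : ℝ) • z, ?_, ?_⟩
    · rw [hopfOsc_smul hC (by norm_num)]
      linarith [hopfOsc_le_two_mul_thompsonNorm (C := C) (e := e) z]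
    · simp only [map_smul, ← hrz, smul_eq_mul]
      ring

end Norms

theorem dual_hopf_norm_eq_half_dual_thompson_general
    {X : Type*} [NormedAddCommGroup X] [NormedSpace ℝ X]
    (C : Set X) (e : X) (hC : IsCPCone C)
    (he : e ∈ interior C) (μ : X →L[ℝ] ℝ) (hμ : μ e = 0) :
    sSup {r : ℝ | ∃ x : X, hopfOsc C e x ≤ 1 ∧ r = μ x} = (1 / 2) * dualTNorm C e μ := by
  rcases eq_or_ne e 0 with rfl | he0
  · have := hC.subsingleton_of_zero_mem_interior he
    have hsSup : ∀ P : X → Prop, sSup {r : ℝ | ∃ x, P x ∧ r = μ x} = 0 := fun P => by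
      have hμ0 : ∀ r ∈ {r : ℝ | ∃ x, P x ∧ r = μ x}, r = 0 := by
        rintro _ ⟨x, -, rfl⟩
        rw [Subsingleton.elim x 0, map_zero]
      exact le_antisymm (Real.sSup_nonpos fun r hr => (hμ0 r hr).le)
        (Real.sSup_nonneg fun r hr => (hμ0 r hr).ge)
    rw [dualTNorm, hsSup, hsSup, mul_zero]
  · have hset := setOf_hopfOsc_le_one_eq_inv_two_smul hC he he0 μ.toLinearMap hμ
    simp only [ContinuousLinearMap.coe_coe] at hset
    -- no boundedness is needed: if the Thompson-side set is unbounded, so is its half, and both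
    -- suprema take the junk value `0`
    rw [hset, Real.sSup_smul_of_nonneg (by norm_num), dualTNorm, smul_eq_mul, one_div]

theorem dual_hopf_norm_eq_half_dual_thompson
    {X : Type*} [NormedAddCommGroup X] [NormedSpace ℝ X] [CompleteSpace X]
    (C : Set X) (e : X) (hC : IsCPCone C) (hnormal : IsNormalCone C)
    (he : e ∈ interior C) (μ : X →L[ℝ] ℝ) (hμ : μ e = 0) :
    sSup {r : ℝ | ∃ x : X, hopfOsc C e x ≤ 1 ∧ r = μ x} = (1 / 2) * dualTNorm C e μ :=
  dual_hopf_norm_eq_half_dual_thompson_general C e hC he μ hμ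
end

section
/- For ν, π ∈ P(e), the following are equivalent: (a) ν ⊥ π; (b) the only elements ρ, σ ∈ P(e) satisfying ν − π = ρ − σ are ρ = ν and σ = π. -/
/-! The affine bijection `μ ↦ (ρ, σ) = (2μ - π, 2μ - ν)`, with inverse
`(ρ, σ) ↦ (ν + σ) / 2 = (π + ρ) / 2`, identifies the functionals `μ ∈ P(e)` with
`μ ≥ ν/2, μ ≥ π/2` in the definition of `ν ⊥ π` with the pairs `ρ, σ ∈ P(e)` satisfying
`ν - π = ρ - σ`; under it `μ = (ν + π) / 2` corresponds exactly to `(ρ, σ) = (ν, π)`. -/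

section DualCone

variable {X : Type*} [NormedAddCommGroup X] [NormedSpace ℝ X] {C : Set X} {e : X}
  {μ ν : X →L[ℝ] ℝ}

theorem add_mem_dualCone (hμ : μ ∈ dualCone C) (hν : ν ∈ dualCone C) :
    μ + ν ∈ dualCone C :=
  fun x hx => add_nonneg (hμ x hx) (hν x hx)

theorem smul_mem_dualCone {t : ℝ} (ht : 0 ≤ t) (hμ : μ ∈ dualCone C) :
    t • μ ∈ dualCone C :=
  fun x hx => mul_nonneg ht (hμ x hx)

theorem convex_simplexSet : Convex ℝ (simplexSet C e) := by
  rintro μ ⟨hμC, hμe⟩ ν ⟨hνC, hνe⟩ a b ha hb hab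
  refine ⟨add_mem_dualCone (smul_mem_dualCone ha hμC) (smul_mem_dualCone hb hνC), ?_⟩
  simp [hμe, hνe, hab]

theorem two_smul_sub_mem_simplexSet_iff (hμ : μ ∈ simplexSet C e) (hν : ν ∈ simplexSet C e) :
    (2 : ℝ) • μ - ν ∈ simplexSet C e ↔ μ - (2 : ℝ)⁻¹ • ν ∈ dualCone C := by
  have h2 : (2 : ℝ) • μ - ν = (2 : ℝ) • (μ - (2 : ℝ)⁻¹ • ν) := by
    rw [smul_sub, smul_smul]; norm_num
  have hunit : ((2 : ℝ) • μ - ν) e = 1 := by simp [hμ.2, hν.2]; norm_num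
  refine ⟨fun h => ?_, fun h => ⟨h2 ▸ smul_mem_dualCone zero_le_two h, hunit⟩⟩
  simpa [h2, smul_smul] using smul_mem_dualCone (inv_nonneg.2 zero_le_two) h.1

end DualCone

theorem disjoint_iff_unique_decomposition_general
    {X : Type*} [NormedAddCommGroup X] [NormedSpace ℝ X]
    (C : Set X) (e : X) (ν π : X →L[ℝ] ℝ)
    (hν : ν ∈ simplexSet C e) (hπ : π ∈ simplexSet C e) :
    disjointIn C e ν π ↔
      ∀ ρ ∈ simplexSet C e, ∀ σ ∈ simplexSet C e, ν - π = ρ - σ → ρ = ν ∧ σ = π := by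
  constructor
  · intro hdisj ρ hρ σ hσ hdiff
    have hsum : ν + σ = ρ + π := sub_eq_sub_iff_add_eq_add.1 hdiff
    set μ := (2 : ℝ)⁻¹ • (ν + σ) with hμ_def
    have hμ : μ ∈ simplexSet C e := by
      rw [hμ_def, smul_add]
      exact convex_simplexSet hν hσ (by norm_num) (by norm_num) (by norm_num)
    have h2μ : (2 : ℝ) • μ = ν + σ := by rw [hμ_def, smul_smul]; norm_num
    have hmid := hdisj μ hμ
      ((two_smul_sub_mem_simplexSet_iff hμ hν).1 (by rwa [h2μ, add_sub_cancel_left]))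
      ((two_smul_sub_mem_simplexSet_iff hμ hπ).1 (by rwa [h2μ, hsum, add_sub_cancel_right]))
    obtain rfl : σ = π := by
      have h : ν + π = ν + σ := by rw [← h2μ, hmid, smul_smul]; norm_num
      exact (add_left_cancel h).symm
    exact ⟨(add_right_cancel hsum).symm, rfl⟩
  · intro huniq μ hμ hμν hμπ
    obtain ⟨hρν, -⟩ := huniq ((2 : ℝ) • μ - π) ((two_smul_sub_mem_simplexSet_iff hμ hπ).2 hμπ)
      ((2 : ℝ) • μ - ν) ((two_smul_sub_mem_simplexSet_iff hμ hν).2 hμν) (by abel)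
    rw [← hρν, sub_add_cancel, smul_smul]; norm_num

theorem disjoint_iff_unique_decomposition
    {X : Type*} [NormedAddCommGroup X] [NormedSpace ℝ X] [CompleteSpace X]
    (C : Set X) (e : X) (hC : IsCPCone C) (hnormal : IsNormalCone C)
    (he : e ∈ interior C) (ν π : X →L[ℝ] ℝ)
    (hν : ν ∈ simplexSet C e) (hπ : π ∈ simplexSet C e) :
    disjointIn C e ν π ↔
      ∀ ρ ∈ simplexSet C e, ∀ σ ∈ simplexSet C e, ν - π = ρ - σ → ρ = ν ∧ σ = π :=
  disjoint_iff_unique_decomposition_general C e ν π hν hπ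
end

section
/- Let A be an n×n row-stochastic matrix (all entries nonnegative, each row summing to 1). Then the contraction rate of A with respect to the diameter seminorm satisfies: sup{Δ(Ax)/Δ(x) : x ∈ ℝⁿ, Δ(x) ≠ 0} = (1/2) max_{i≠j} Σ_{k=1}^{n} |A_{ik} − A_{jk}| = 1 − min_{i≠j} Σ_{s=1}^{n} min(A_{is}, A_{js}) (Dobrushin's ergodicity coefficient). -/
noncomputable section

/-- The diameter seminorm `Δ(x) = max_{i,j} (x_i - x_j)` on `ℝⁿ`. -/
def diamSemi (n : ℕ) (x : Fin n → ℝ) : ℝ :=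
  sSup {r : ℝ | ∃ i j : Fin n, r = x i - x j}

end

/-!
For a matrix with constant row sums, `(Ax)_a - (Ax)_b = ∑ₖ uₖ xₖ` with `u = A_a - A_b` summing to
zero. Shifting `x` into `[m, m + Δ(x)]` and discarding the negative part of `u` bounds this by
`(∑ₖ uₖ⁺) Δ(x) = ½ ‖u‖₁ Δ(x)`, and the indicator of `{uₖ > 0}` attains the bound. The second formula
follows from `|a - b| = a + b - 2 min(a, b)` for rows of sum one.
-/

open Finset Matrix

section FiniteSums

variable {ι : Type*} [Fintype ι]

theorem sum_max_zero_eq_half_sum_abs {u : ι → ℝ} (hu : ∑ k, u k = 0) :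
    ∑ k, max (u k) 0 = (∑ k, |u k|) / 2 := by
  have hpos : ∀ a : ℝ, max a 0 = (a + |a|) / 2 := fun a => by
    rcases le_total 0 a with h | h <;> simp [h, abs_of_nonneg, abs_of_nonpos]
  simp only [hpos, ← sum_div, sum_add_distrib, hu, zero_add]

theorem sum_mul_le_half_sum_abs_mul {u x : ι → ℝ} (hu : ∑ k, u k = 0) {m d : ℝ}
    (hx : ∀ k, x k ∈ Set.Icc m (m + d)) : ∑ k, u k * x k ≤ (∑ k, |u k|) / 2 * d :=
  calc ∑ k, u k * x k = ∑ k, u k * (x k - m) := by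
        simp only [mul_sub, sum_sub_distrib, ← sum_mul, hu, zero_mul, sub_zero]
    _ ≤ ∑ k, max (u k) 0 * d := sum_le_sum fun k _ => by
        have hxk := hx k
        calc u k * (x k - m) ≤ max (u k) 0 * (x k - m) := by gcongr; linarith [hxk.1]; simp
          _ ≤ max (u k) 0 * d := by gcongr; simp; linarith [hxk.2]
    _ = (∑ k, |u k|) / 2 * d := by rw [← sum_mul, sum_max_zero_eq_half_sum_abs hu]

theorem sum_mul_indicator_pos_eq_half_sum_abs {u : ι → ℝ} (hu : ∑ k, u k = 0) :
    ∑ k, u k * (if 0 < u k then 1 else 0) = (∑ k, |u k|) / 2 := by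
  rw [← sum_max_zero_eq_half_sum_abs hu]
  refine sum_congr rfl fun k _ => ?_
  split_ifs with h
  · simp [h.le]
  · simp [not_lt.1 h]

theorem sum_abs_sub_eq_sum_add_sum_sub_two_mul_sum_min (a b : ι → ℝ) :
    ∑ k, |a k - b k| = ∑ k, a k + ∑ k, b k - 2 * ∑ k, min (a k) (b k) := by
  have h : ∀ k, |a k - b k| = a k + b k - 2 * min (a k) (b k) := fun k => by
    rw [← max_sub_min_eq_abs', ← min_add_max (a k) (b k)]; ring
  simp only [h, sum_sub_distrib, sum_add_distrib, mul_sum]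

end FiniteSums

namespace Set

variable {ι α : Type*} [Finite ι]

theorem finite_setOf_exists_eq_apply₂ (f : ι → ι → α) : {a | ∃ i j, a = f i j}.Finite :=
  (finite_range fun p : ι × ι => f p.1 p.2).subset <| by
    rintro a ⟨i, j, rfl⟩
    exact ⟨(i, j), rfl⟩

theorem finite_setOf_exists_and_eq_apply₂ (P : ι → ι → Prop) (f : ι → ι → α) :
    {a | ∃ i j, P i j ∧ a = f i j}.Finite :=
  (finite_setOf_exists_eq_apply₂ f).subset <| by
    rintro a ⟨i, j, -, rfl⟩
    exact ⟨i, j, rfl⟩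

end Set

section Diam

variable {n : ℕ}

theorem sub_le_diamSemi (x : Fin n → ℝ) (i j : Fin n) : x i - x j ≤ diamSemi n x :=
  le_csSup (Set.finite_setOf_exists_eq_apply₂ _).bddAbove ⟨i, j, rfl⟩

variable [NeZero n]

theorem exists_diamSemi_eq_sub (x : Fin n → ℝ) : ∃ i j, diamSemi n x = x i - x j :=
  Set.Nonempty.csSup_mem (s := {r : ℝ | ∃ i j : Fin n, r = x i - x j}) ⟨x 0 - x 0, 0, 0, rfl⟩
    (Set.finite_setOf_exists_eq_apply₂ _)

theorem diamSemi_nonneg (x : Fin n → ℝ) : 0 ≤ diamSemi n x := by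
  simpa using sub_le_diamSemi x 0 0

theorem exists_forall_mem_Icc_diamSemi (x : Fin n → ℝ) :
    ∃ m, ∀ k, x k ∈ Set.Icc m (m + diamSemi n x) := by
  obtain ⟨i, j, h⟩ := exists_diamSemi_eq_sub x
  refine ⟨x j, fun k => ⟨?_, ?_⟩⟩ <;> linarith [sub_le_diamSemi x i k, sub_le_diamSemi x k j]

theorem diamSemi_le_of_forall_mem_Icc {x : Fin n → ℝ} {m d : ℝ}
    (hx : ∀ k, x k ∈ Set.Icc m (m + d)) : diamSemi n x ≤ d := by
  obtain ⟨i, j, h⟩ := exists_diamSemi_eq_sub x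
  linarith [(hx i).2, (hx j).1]

end Diam

section Rows

variable {ι κ : Type*} [Fintype κ] {A : Matrix ι κ ℝ}

theorem Matrix.mulVec_sub_mulVec_apply (A : Matrix ι κ ℝ) (x : κ → ℝ) (i j : ι) :
    (A *ᵥ x) i - (A *ᵥ x) j = ∑ k, (A i k - A j k) * x k := by
  simp only [mulVec, dotProduct, sub_mul, sum_sub_distrib]

theorem sum_row_sub_row_eq_zero {c : ℝ} (hrow : ∀ i, ∑ k, A i k = c) (i j : ι) :
    ∑ k, (A i k - A j k) = 0 := by
  rw [sum_sub_distrib, hrow, hrow, sub_self]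

end Rows

section RowSums

variable {n : ℕ} {A : Matrix (Fin n) (Fin n) ℝ} {c : ℝ}

variable [NeZero n]

theorem diamSemi_mulVec_le (hrow : ∀ i, ∑ k, A i k = c) {δ : ℝ}
    (hδ : ∀ i j, ∑ k, |A i k - A j k| ≤ δ) (x : Fin n → ℝ) :
    diamSemi n (A *ᵥ x) ≤ δ / 2 * diamSemi n x := by
  obtain ⟨a, b, hab⟩ := exists_diamSemi_eq_sub (A *ᵥ x)
  obtain ⟨m, hm⟩ := exists_forall_mem_Icc_diamSemi x
  rw [hab, A.mulVec_sub_mulVec_apply]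
  calc _ ≤ (∑ k, |A a k - A b k|) / 2 * diamSemi n x :=
        sum_mul_le_half_sum_abs_mul (sum_row_sub_row_eq_zero hrow a b) hm
    _ ≤ δ / 2 * diamSemi n x := by gcongr; exacts [diamSemi_nonneg x, hδ a b]

theorem exists_diamSemi_eq_one_and_diamSemi_mulVec_eq (hrow : ∀ i, ∑ k, A i k = c)
    {i j : Fin n} (hij : i ≠ j)
    (hmax : ∀ a b, ∑ k, |A a k - A b k| ≤ ∑ k, |A i k - A j k|) :
    ∃ x, diamSemi n x = 1 ∧ diamSemi n (A *ᵥ x) = (∑ k, |A i k - A j k|) / 2 := by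
  have hbound (x : Fin n → ℝ) (hx : ∀ k, x k = 0 ∨ x k = 1) : diamSemi n x ≤ 1 :=
    diamSemi_le_of_forall_mem_Icc (m := 0) fun k => by rcases hx k with h | h <;> simp [h]
  rcases (sum_nonneg fun k _ => abs_nonneg (A i k - A j k)).lt_or_eq with hpos | hzero
  · set x : Fin n → ℝ := fun k => if 0 < A i k - A j k then 1 else 0
    have hlow : (∑ k, |A i k - A j k|) / 2 ≤ diamSemi n (A *ᵥ x) := by
      rw [← sum_mul_indicator_pos_eq_half_sum_abs (sum_row_sub_row_eq_zero hrow i j),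
        ← A.mulVec_sub_mulVec_apply]
      exact sub_le_diamSemi _ i j
    have hup := diamSemi_mulVec_le hrow hmax x
    have hx_le : diamSemi n x ≤ 1 := hbound x fun k => by unfold x; split_ifs <;> simp
    -- `δ / 2 ≤ Δ(Ax) ≤ δ / 2 · Δ(x)` with `δ > 0` forces `Δ(x) = 1`.
    have hx_ge : 1 ≤ diamSemi n x := by nlinarith
    exact ⟨x, by linarith, by nlinarith⟩
  · have hup := diamSemi_mulVec_le hrow hmax (Pi.single i 1)
    refine ⟨Pi.single i 1, le_antisymm (hbound _ fun k => ?_) ?_, ?_⟩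
    · by_cases hk : k = i <;> simp [hk]
    · simpa [hij.symm] using sub_le_diamSemi (Pi.single i (1 : ℝ)) i j
    · rw [← hzero] at hup ⊢
      linarith [diamSemi_nonneg (A *ᵥ Pi.single i 1)]

theorem sSup_diamSemi_mulVec_div_eq (hrow : ∀ i, ∑ k, A i k = c) {i j : Fin n} (hij : i ≠ j)
    (hmax : ∀ a b, ∑ k, |A a k - A b k| ≤ ∑ k, |A i k - A j k|) :
    sSup {r : ℝ | ∃ x : Fin n → ℝ, diamSemi n x ≠ 0 ∧
        r = diamSemi n (A *ᵥ x) / diamSemi n x} = (∑ k, |A i k - A j k|) / 2 := by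
  refine IsGreatest.csSup_eq ⟨?_, ?_⟩
  · obtain ⟨x, hx, hAx⟩ := exists_diamSemi_eq_one_and_diamSemi_mulVec_eq hrow hij hmax
    exact ⟨x, by simp [hx], by rw [hx, hAx, div_one]⟩
  · rintro r ⟨x, hx, rfl⟩
    rw [div_le_iff₀ ((diamSemi_nonneg x).lt_of_ne' hx)]
    exact diamSemi_mulVec_le hrow hmax x

end RowSums

theorem dobrushin_ergodicity_coefficient_general (n : ℕ) (hn : 1 < n)
    (A : Matrix (Fin n) (Fin n) ℝ)
    (hrow : ∀ i : Fin n, ∑ j, A i j = 1) :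
    sSup {r : ℝ | ∃ x : Fin n → ℝ, diamSemi n x ≠ 0 ∧
          r = diamSemi n (A.mulVec x) / diamSemi n x} =
        (1 / 2) * sSup {r : ℝ | ∃ i j : Fin n, i ≠ j ∧ r = ∑ k, |A i k - A j k|} ∧
      sSup {r : ℝ | ∃ x : Fin n → ℝ, diamSemi n x ≠ 0 ∧
          r = diamSemi n (A.mulVec x) / diamSemi n x} =
        1 - sInf {r : ℝ | ∃ i j : Fin n, i ≠ j ∧ r = ∑ s, min (A i s) (A j s)} := by
  have : NeZero n := ⟨by omega⟩
  have hpair : ∃ i j : Fin n, i ≠ j := ⟨⟨0, by omega⟩, ⟨1, hn⟩, by simp [Fin.ext_iff]⟩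
  set S := {r : ℝ | ∃ i j : Fin n, i ≠ j ∧ r = ∑ k, |A i k - A j k|}
  set M := {r : ℝ | ∃ i j : Fin n, i ≠ j ∧ r = ∑ s, min (A i s) (A j s)}
  obtain ⟨i, j, hij, hSij⟩ : sSup S ∈ S := by
    obtain ⟨i, j, hij⟩ := hpair
    exact Set.Nonempty.csSup_mem ⟨_, i, j, hij, rfl⟩ (Set.finite_setOf_exists_and_eq_apply₂ _ _)
  have hmax (a b : Fin n) : ∑ k, |A a k - A b k| ≤ ∑ k, |A i k - A j k| := by
    rcases eq_or_ne a b with rfl | hab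
    · simpa using sum_nonneg fun k _ => abs_nonneg (A i k - A j k)
    · exact hSij ▸ le_csSup (Set.finite_setOf_exists_and_eq_apply₂ _ _).bddAbove ⟨a, b, hab, rfl⟩
  have hSM : S = (fun r => 2 - 2 * r) '' M := by
    ext r
    simp [S, M, sum_abs_sub_eq_sum_add_sum_sub_two_mul_sum_min, hrow, eq_comm, one_add_one_eq_two]
  have hsup : sSup S = 2 - 2 * sInf M := by
    obtain ⟨a, b, hab⟩ := hpair
    rw [hSM, ← Antitone.map_csInf_of_continuousAt (by fun_prop)
      (fun x y h => by linarith) (show M.Nonempty from ⟨_, a, b, hab, rfl⟩)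
      (Set.finite_setOf_exists_and_eq_apply₂ _ _).bddBelow]
  rw [sSup_diamSemi_mulVec_div_eq hrow hij hmax, ← hSij, hsup]
  constructor <;> ring

theorem dobrushin_ergodicity_coefficient (n : ℕ) (hn : 1 < n)
    (A : Matrix (Fin n) (Fin n) ℝ)
    (hpos : ∀ i j : Fin n, 0 ≤ A i j) (hrow : ∀ i : Fin n, ∑ j, A i j = 1) :
    sSup {r : ℝ | ∃ x : Fin n → ℝ, diamSemi n x ≠ 0 ∧
          r = diamSemi n (A.mulVec x) / diamSemi n x} =
        (1 / 2) * sSup {r : ℝ | ∃ i j : Fin n, i ≠ j ∧ r = ∑ k, |A i k - A j k|} ∧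
      sSup {r : ℝ | ∃ x : Fin n → ℝ, diamSemi n x ≠ 0 ∧
          r = diamSemi n (A.mulVec x) / diamSemi n x} =
        1 - sInf {r : ℝ | ∃ i j : Fin n, i ≠ j ∧ r = ∑ s, min (A i s) (A j s)} :=
  dobrushin_ergodicity_coefficient_general n hn A hrow
end

section
/- Let φ : (0,∞)ⁿ → ℝⁿ be continuously differentiable with φ(λx) = λφ(x) for all λ > 0, let M_t denote the (local) flow of ẋ = φ(x), and let U ⊆ (0,∞)ⁿ be a convex open set with λU = U for all λ > 0. Then the optimal contraction rate of the flow in Hilbert's projective metric, α(U) = inf{α ∈ ℝ : d_H(M_t(x₁), M_t(x₂)) ≤ e^{αt} d_H(x₁,x₂) for all x₁, x₂ ∈ U, 0 ≤ t < t_U(x₁) ∧ t_U(x₂)}, equals sup_{x ∈ U} h(δ(x)⁻¹ Dφ(x) δ(x)), where δ(x) is the diagonal matrix with diagonal x and h(A) = −min_{i≠j} (A_{ji} + A_{ij} + Σ_{k∉{i,j}} min(A_{ik}, A_{jk})). -/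
open scoped ENNReal Pointwise

noncomputable section

/-- Hilbert's projective metric on the interior `(0,∞)ⁿ` of the standard positive cone:
`d_H(x,y) = log (max_i (x_i/y_i) / min_i (x_i/y_i))`. -/
def hilbertDistRn (n : ℕ) (x y : Fin n → ℝ) : ℝ :=
  Real.log (sSup {r : ℝ | ∃ i : Fin n, r = x i / y i} /
    sInf {r : ℝ | ∃ i : Fin n, r = x i / y i})

/-- The matrix `δ(x)⁻¹ Dφ(x) δ(x)`, where `δ(x)` is the diagonal matrix with diagonal `x`
and `Dφ(x)` is the Jacobian matrix of `φ` at `x`. -/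
def conjJacobian (n : ℕ) (φ : (Fin n → ℝ) → Fin n → ℝ) (x : Fin n → ℝ)
    (i j : Fin n) : ℝ :=
  fderiv ℝ φ x (Pi.single j 1) i * x j / x i

/-- The contraction rate functional `h(A)` for a matrix `A`. -/
def hMat (n : ℕ) (A : Fin n → Fin n → ℝ) : ℝ :=
  - sInf {r : ℝ | ∃ i j : Fin n, i ≠ j ∧
      r = A j i + A i j + ∑ k ∈ Finset.univ \ {i, j}, min (A i k) (A j k)}

/-- The open positive orthant, i.e. the interior of the standard positive cone of `ℝⁿ`. -/
def posOrthant (n : ℕ) : Set (Fin n → ℝ) := {x | ∀ i, 0 < x i}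

end


/-!
With `u = log x - log y` we have `d_H(x, y) = max u - min u`, and along two trajectories the gap
`u_i - u_j` moves at speed `(φ_i/x_i - φ_j/x_j)(M_t x) - (φ_i/x_i - φ_j/x_j)(M_t y)`. By Euler's
relation `Dφ(z) z = φ(z)`, along the segment from `y` to `x` the derivative of `φ_i/z_i - φ_j/z_j`
is `Σ_k A_ik (w_k - w_i) - Σ_k A_jk (w_k - w_j)` with `A = δ(z)⁻¹ Dφ(z) δ(z)` and `w = (x - y)/z`.
When `i`, `j` realise the maximum and minimum of `x/y`, `w` is maximal at `i` and minimal at `j`,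
and this drift is at most `h(A) (w_i - w_j)`. Integrating, and applying Grönwall to the maximum of
the finitely many gaps, gives the rate `sup h`. Conversely, perturbing `x` to `x e^{εc}` for a
suitable `0/1` vector `c` makes the drift bound an equality, so no smaller rate is possible.
-/

open Set Filter Topology

section HilbertMetric

variable {n : ℕ}

noncomputable def hilbertGap (x y : Fin n → ℝ) (i j : Fin n) : ℝ :=
  (Real.log (x i) - Real.log (y i)) - (Real.log (x j) - Real.log (y j))

lemma log_sub_log_le_log_sub_log_iff {a b c d : ℝ} (ha : 0 < a) (hb : 0 < b) (hc : 0 < c)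
    (hd : 0 < d) : Real.log a - Real.log b ≤ Real.log c - Real.log d ↔ a / b ≤ c / d := by
  rw [← Real.log_div ha.ne' hb.ne', ← Real.log_div hc.ne' hd.ne',
    Real.log_le_log_iff (div_pos ha hb) (div_pos hc hd)]

variable {x y : Fin n → ℝ}

lemma hilbertDistRn_eq_hilbertGap (hx : x ∈ posOrthant n) (hy : y ∈ posOrthant n) {i j : Fin n}
    (hi : ∀ k, x k / y k ≤ x i / y i) (hj : ∀ k, x j / y j ≤ x k / y k) :
    hilbertDistRn n x y = hilbertGap x y i j := by
  have hsup : sSup {r : ℝ | ∃ k, r = x k / y k} = x i / y i :=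
    IsGreatest.csSup_eq ⟨⟨i, rfl⟩, by rintro _ ⟨k, rfl⟩; exact hi k⟩
  have hinf : sInf {r : ℝ | ∃ k, r = x k / y k} = x j / y j :=
    IsLeast.csInf_eq ⟨⟨j, rfl⟩, by rintro _ ⟨k, rfl⟩; exact hj k⟩
  rw [hilbertDistRn, hsup, hinf, hilbertGap,
    Real.log_div (div_pos (hx i) (hy i)).ne' (div_pos (hx j) (hy j)).ne',
    Real.log_div (hx i).ne' (hy i).ne', Real.log_div (hx j).ne' (hy j).ne']

lemma exists_hilbertDistRn_eq_hilbertGap [NeZero n] (hx : x ∈ posOrthant n)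
    (hy : y ∈ posOrthant n) :
    ∃ i j, (∀ k, x k / y k ≤ x i / y i) ∧ (∀ k, x j / y j ≤ x k / y k) ∧
      hilbertDistRn n x y = hilbertGap x y i j := by
  obtain ⟨i, hi⟩ := Finite.exists_max fun k => x k / y k
  obtain ⟨j, hj⟩ := Finite.exists_min fun k => x k / y k
  exact ⟨i, j, hi, hj, hilbertDistRn_eq_hilbertGap hx hy hi hj⟩

lemma hilbertGap_le_hilbertDistRn (hx : x ∈ posOrthant n) (hy : y ∈ posOrthant n) (i j : Fin n) :
    hilbertGap x y i j ≤ hilbertDistRn n x y := by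
  have : NeZero n := NeZero.of_pos i.pos
  obtain ⟨i', j', hi', hj', hd⟩ := exists_hilbertDistRn_eq_hilbertGap hx hy
  have hi := (log_sub_log_le_log_sub_log_iff (hx i) (hy i) (hx i') (hy i')).2 (hi' i)
  have hj := (log_sub_log_le_log_sub_log_iff (hx j') (hy j') (hx j) (hy j)).2 (hj' j)
  rw [hd, hilbertGap, hilbertGap]
  linarith

lemma ratio_le_of_hilbertGap_eq (hx : x ∈ posOrthant n) (hy : y ∈ posOrthant n) {i j : Fin n}
    (h : hilbertGap x y i j = hilbertDistRn n x y) :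
    (∀ k, x k / y k ≤ x i / y i) ∧ (∀ k, x j / y j ≤ x k / y k) := by
  have : NeZero n := NeZero.of_pos i.pos
  obtain ⟨i', j', hi', hj', hd⟩ := exists_hilbertDistRn_eq_hilbertGap hx hy
  have hi := (log_sub_log_le_log_sub_log_iff (hx i) (hy i) (hx i') (hy i')).2 (hi' i)
  have hj := (log_sub_log_le_log_sub_log_iff (hx j') (hy j') (hx j) (hy j)).2 (hj' j)
  rw [hd, hilbertGap, hilbertGap] at h
  exact ⟨fun k => (hi' k).trans ((log_sub_log_le_log_sub_log_iff (hx i') (hy i') (hx i) (hy i)).1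
      (by linarith)),
    fun k => ((log_sub_log_le_log_sub_log_iff (hx j) (hy j) (hx j') (hy j')).1
      (by linarith)).trans (hj' k)⟩

lemma hasDerivAt_hilbertGap {x y : ℝ → Fin n → ℝ} {x' y' : Fin n → ℝ} {s : ℝ}
    (hx : HasDerivAt x x' s) (hy : HasDerivAt y y' s) (hxs : x s ∈ posOrthant n)
    (hys : y s ∈ posOrthant n) (i j : Fin n) :
    HasDerivAt (fun t => hilbertGap (x t) (y t) i j)
      ((x' i / x s i - y' i / y s i) - (x' j / x s j - y' j / y s j)) s := by
  have hlog : ∀ {z : ℝ → Fin n → ℝ} {z' : Fin n → ℝ}, HasDerivAt z z' s → z s ∈ posOrthant n →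
      ∀ k, HasDerivAt (fun t => Real.log (z t k)) (z' k / z s k) s :=
    fun hz hzs k => (hasDerivAt_pi.1 hz k).log (hzs k).ne'
  exact ((hlog hx hxs i).sub (hlog hy hys i)).sub ((hlog hx hxs j).sub (hlog hy hys j))

lemma hilbertDistRn_mul_exp (hx : x ∈ posOrthant n) {c : Fin n → ℝ} (hc : ∀ k, c k ∈ Icc 0 1)
    {i j : Fin n} (hci : c i = 1) (hcj : c j = 0) {ε : ℝ} (hε : 0 ≤ ε) :
    hilbertGap x (fun k => x k * Real.exp (ε * c k)) j i = ε ∧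
      hilbertDistRn n x (fun k => x k * Real.exp (ε * c k)) = ε := by
  set y : Fin n → ℝ := fun k => x k * Real.exp (ε * c k)
  have hy : y ∈ posOrthant n := fun k => mul_pos (hx k) (Real.exp_pos _)
  have hratio : ∀ k, x k / y k = Real.exp (-(ε * c k)) := fun k => by
    rw [Real.exp_neg, div_mul_cancel_left₀ (hx k).ne']
  have hgap : hilbertGap x y j i = ε := by
    simp only [hilbertGap, y, Real.log_mul (hx _).ne' (Real.exp_pos _).ne', Real.log_exp, hci, hcj]
    ring
  refine ⟨hgap, hgap ▸ hilbertDistRn_eq_hilbertGap hx hy (fun k => ?_) (fun k => ?_)⟩ <;>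
    simp only [hratio, Real.exp_le_exp, hci, hcj, mul_zero, mul_one, neg_zero, neg_le_neg_iff,
      neg_nonpos]
  · exact mul_nonneg hε (hc k).1
  · exact mul_le_of_le_one_right hε (hc k).2

end HilbertMetric

section ConjJacobian

variable {n : ℕ} {φ : (Fin n → ℝ) → Fin n → ℝ}

lemma isOpen_posOrthant : IsOpen (posOrthant n) := by
  simpa only [posOrthant, ofPred_forall] using
    isOpen_iInter_of_finite fun i => isOpen_lt continuous_const (continuous_apply i)

lemma fderiv_apply_eq_mul_sum_conjJacobian {x : Fin n → ℝ} (hx : x ∈ posOrthant n)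
    (v : Fin n → ℝ) (m : Fin n) :
    fderiv ℝ φ x v m = x m * ∑ k, conjJacobian n φ x m k * (v k / x k) := by
  conv_lhs => rw [← Finset.univ_sum_single v]
  rw [map_sum, Finset.sum_apply, Finset.mul_sum]
  refine Finset.sum_congr rfl fun k _ => ?_
  rw [show Pi.single k (v k) = v k • Pi.single k (1 : ℝ) by
    rw [← Pi.single_smul, smul_eq_mul, mul_one], map_smul, Pi.smul_apply,
    smul_eq_mul, conjJacobian]
  field_simp [(hx k).ne', (hx m).ne']

lemma hasFDerivAt_of_mem_posOrthant (hφ : ContDiffOn ℝ 1 φ (posOrthant n)) {x : Fin n → ℝ}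
    (hx : x ∈ posOrthant n) : HasFDerivAt φ (fderiv ℝ φ x) x :=
  ((hφ.differentiableOn one_ne_zero).differentiableAt (isOpen_posOrthant.mem_nhds hx)).hasFDerivAt

lemma fderiv_apply_self_of_homogeneous (hφ : ContDiffOn ℝ 1 φ (posOrthant n))
    (hhom : ∀ l : ℝ, 0 < l → ∀ x ∈ posOrthant n, φ (l • x) = l • φ x)
    {x : Fin n → ℝ} (hx : x ∈ posOrthant n) : fderiv ℝ φ x x = φ x := by
  have hφx : HasFDerivAt φ (fderiv ℝ φ x) ((1 : ℝ) • x) := by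
    rw [one_smul]
    exact hasFDerivAt_of_mem_posOrthant hφ hx
  have hray : HasDerivAt (fun l : ℝ => φ (l • x)) (fderiv ℝ φ x x) 1 :=
    hφx.comp_hasDerivAt 1 (by simpa using (hasDerivAt_id (1 : ℝ)).smul_const x)
  have hhom' : (fun l : ℝ => φ (l • x)) =ᶠ[𝓝 1] fun l => l • φ x :=
    eventually_of_mem (Ioi_mem_nhds one_pos) fun l hl => hhom l hl x hx
  exact (hray.congr_of_eventuallyEq hhom'.symm).unique
    (by simpa using (hasDerivAt_id (1 : ℝ)).smul_const (φ x))

lemma apply_eq_mul_sum_conjJacobian (hφ : ContDiffOn ℝ 1 φ (posOrthant n))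
    (hhom : ∀ l : ℝ, 0 < l → ∀ x ∈ posOrthant n, φ (l • x) = l • φ x)
    {x : Fin n → ℝ} (hx : x ∈ posOrthant n) (m : Fin n) :
    φ x m = x m * ∑ k, conjJacobian n φ x m k := by
  rw [← fderiv_apply_self_of_homogeneous hφ hhom hx, fderiv_apply_eq_mul_sum_conjJacobian hx]
  exact congrArg _ (Finset.sum_congr rfl fun k _ => by rw [div_self (hx k).ne', mul_one])

lemma hasDerivAt_apply_div_apply (hφ : ContDiffOn ℝ 1 φ (posOrthant n))
    (hhom : ∀ l : ℝ, 0 < l → ∀ x ∈ posOrthant n, φ (l • x) = l • φ x)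
    {z : ℝ → Fin n → ℝ} {v : Fin n → ℝ} {s : ℝ} (hz : HasDerivAt z v s)
    (hzs : z s ∈ posOrthant n) (m : Fin n) :
    HasDerivAt (fun t => φ (z t) m / z t m)
      (∑ k, conjJacobian n φ (z s) m k * (v k / z s k - v m / z s m)) s := by
  have hφz := hasDerivAt_pi.1 ((hasFDerivAt_of_mem_posOrthant hφ hzs).comp_hasDerivAt s hz) m
  refine (hφz.div (hasDerivAt_pi.1 hz m) (hzs m).ne').congr_deriv ?_
  rw [fderiv_apply_eq_mul_sum_conjJacobian hzs, Function.comp_apply,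
    apply_eq_mul_sum_conjJacobian hφ hhom hzs]
  simp only [mul_sub, Finset.sum_sub_distrib, ← Finset.sum_mul]
  field_simp [(hzs m).ne']

end ConjJacobian

section PairBound

variable {n : ℕ}

def hMatPair (A : Fin n → Fin n → ℝ) (i j : Fin n) : ℝ :=
  A j i + A i j + ∑ k ∈ Finset.univ \ {i, j}, min (A i k) (A j k)

def pairDrift (A : Fin n → Fin n → ℝ) (w : Fin n → ℝ) (i j : Fin n) : ℝ :=
  ∑ k, A i k * (w k - w i) - ∑ k, A j k * (w k - w j)

lemma neg_hMatPair_le_hMat (A : Fin n → Fin n → ℝ) {i j : Fin n} (hij : i ≠ j) :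
    -hMatPair A i j ≤ hMat n A := by
  have hbdd : BddBelow {r : ℝ | ∃ i j : Fin n, i ≠ j ∧ r = hMatPair A i j} :=
    ((Set.finite_range fun p : Fin n × Fin n => hMatPair A p.1 p.2).subset
      (by rintro _ ⟨i, j, -, rfl⟩; exact ⟨(i, j), rfl⟩)).bddBelow
  exact neg_le_neg (csInf_le hbdd ⟨i, j, hij, rfl⟩)

lemma hMat_le_of_forall_neg_hMatPair_le (hn : 1 < n) {A : Fin n → Fin n → ℝ} {α : ℝ}
    (h : ∀ i j, i ≠ j → -hMatPair A i j ≤ α) : hMat n A ≤ α := by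
  have hne : {r : ℝ | ∃ i j : Fin n, i ≠ j ∧ r = hMatPair A i j}.Nonempty :=
    ⟨_, ⟨0, by omega⟩, ⟨1, hn⟩, by simp [Fin.ext_iff], rfl⟩
  exact neg_le.1 (le_csInf hne fun _ ⟨i, j, hij, hr⟩ => hr ▸ neg_le.1 (h i j hij))

lemma sum_univ_eq_add_add_sum_sdiff_pair {i j : Fin n} (hij : i ≠ j) (f : Fin n → ℝ) :
    ∑ k, f k = f i + f j + ∑ k ∈ Finset.univ \ {i, j}, f k := by
  rw [← Finset.sum_sdiff (Finset.subset_univ {i, j}), Finset.sum_pair hij, add_comm]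

lemma pairDrift_le_neg_hMatPair_mul (A : Fin n → Fin n → ℝ) {w : Fin n → ℝ} {i j : Fin n}
    (hij : i ≠ j) (hi : ∀ k, w k ≤ w i) (hj : ∀ k, w j ≤ w k) :
    pairDrift A w i j ≤ -hMatPair A i j * (w i - w j) := by
  have hterm : ∀ k, A i k * (w k - w i) - A j k * (w k - w j) ≤
      -(min (A i k) (A j k) * (w i - w j)) := fun k => by
    rcases le_total (A j k) (A i k) with hle | hle
    · rw [min_eq_right hle]
      nlinarith [mul_le_mul_of_nonpos_right hle (sub_nonpos.2 (hi k))]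
    · rw [min_eq_left hle]
      nlinarith [mul_le_mul_of_nonneg_right hle (sub_nonneg.2 (hj k))]
  have hrest := Finset.sum_le_sum fun k (_ : k ∈ Finset.univ \ {i, j}) => hterm k
  rw [pairDrift, ← Finset.sum_sub_distrib, sum_univ_eq_add_add_sum_sdiff_pair hij, hMatPair]
  rw [Finset.sum_neg_distrib, ← Finset.sum_mul] at hrest
  nlinarith

lemma pairDrift_le_hMat_mul {A : Fin n → Fin n → ℝ} {w : Fin n → ℝ} {i j : Fin n}
    (hi : ∀ k, w k ≤ w i) (hj : ∀ k, w j ≤ w k) :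
    pairDrift A w i j ≤ hMat n A * (w i - w j) := by
  rcases eq_or_ne i j with rfl | hij
  · simp [pairDrift]
  exact (pairDrift_le_neg_hMatPair_mul A hij hi hj).trans
    (mul_le_mul_of_nonneg_right (neg_hMatPair_le_hMat A hij) (sub_nonneg.2 (hj i)))

lemma exists_pairDrift_eq_neg_hMatPair (A : Fin n → Fin n → ℝ) {i j : Fin n} (hij : i ≠ j) :
    ∃ c : Fin n → ℝ, (∀ k, c k ∈ Icc 0 1) ∧ c i = 1 ∧ c j = 0 ∧
      pairDrift A c i j = -hMatPair A i j := by
  classical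
  set c : Fin n → ℝ := fun k => if k = i then 1 else if k = j then 0 else
    if A j k ≤ A i k then 1 else 0
  have hci : c i = 1 := if_pos rfl
  have hcj : c j = 0 := by simp [c, hij.symm]
  refine ⟨c, fun k => by simp only [c]; split_ifs <;> norm_num, hci, hcj, ?_⟩
  have hrest : ∀ k ∈ Finset.univ \ {i, j}, A i k * (c k - c i) - A j k * (c k - c j) =
      -min (A i k) (A j k) := fun k hk => by
    obtain ⟨hki, hkj⟩ : k ≠ i ∧ k ≠ j := by simpa [not_or] using hk
    simp only [c, if_neg hki, if_neg hkj, hci, hcj]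
    split_ifs with hle
    · rw [min_eq_right hle]; ring
    · rw [min_eq_left (le_of_not_ge hle)]; ring
  rw [pairDrift, ← Finset.sum_sub_distrib, sum_univ_eq_add_add_sum_sdiff_pair hij,
    Finset.sum_congr rfl hrest, hMatPair, hci, hcj, Finset.sum_neg_distrib]
  ring

end PairBound

section Segment

variable {n : ℕ} {φ : (Fin n → ℝ) → Fin n → ℝ}

lemma sub_div_add_mul_sub_le_of_div_le {a b c d s : ℝ} (hb : 0 < b) (hd : 0 < d)
    (hab : 0 < b + s * (a - b)) (hcd : 0 < d + s * (c - d)) (h : a / b ≤ c / d) :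
    (a - b) / (b + s * (a - b)) ≤ (c - d) / (d + s * (c - d)) := by
  rw [div_le_div_iff₀ hab hcd]
  rw [div_le_div_iff₀ hb hd] at h
  nlinarith

-- Integrate the drift along the segment from `y` to `x`: the ratios `(x - y) / z` along it
-- stay maximal at `i` and minimal at `j`.
lemma phi_div_sub_le_mul_hilbertGap (hφ : ContDiffOn ℝ 1 φ (posOrthant n))
    (hhom : ∀ l : ℝ, 0 < l → ∀ x ∈ posOrthant n, φ (l • x) = l • φ x)
    {U : Set (Fin n → ℝ)} (hUconv : Convex ℝ U) (hUsub : U ⊆ posOrthant n) {α : ℝ}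
    (hα : ∀ z ∈ U, hMat n (conjJacobian n φ z) ≤ α) {x y : Fin n → ℝ} (hx : x ∈ U) (hy : y ∈ U)
    {i j : Fin n} (hi : ∀ k, x k / y k ≤ x i / y i) (hj : ∀ k, x j / y j ≤ x k / y k) :
    (φ x i / x i - φ x j / x j) - (φ y i / y i - φ y j / y j) ≤ α * hilbertGap x y i j := by
  set z : ℝ → Fin n → ℝ := ⇑(AffineMap.lineMap (k := ℝ) y x)
  have hzU : ∀ s ∈ Icc (0 : ℝ) 1, z s ∈ U := fun s hs => hUconv.lineMap_mem hy hx hs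
  have hzk : ∀ s k, z s k = y k + s * (x k - y k) := fun s k => by
    simp only [z, AffineMap.lineMap_apply_module, Pi.add_apply, Pi.smul_apply, smul_eq_mul]
    ring
  set w : ℝ → Fin n → ℝ := fun s k => (x - y) k / z s k
  set Φ : ℝ → ℝ := fun s =>
    (φ (z s) i / z s i - φ (z s) j / z s j) - α * (Real.log (z s i) - Real.log (z s j))
  have hΦ : ∀ s ∈ Icc (0 : ℝ) 1,
      HasDerivAt Φ (pairDrift (conjJacobian n φ (z s)) (w s) i j - α * (w s i - w s j)) s := by
    intro s hs
    have hzs := hUsub (hzU s hs)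
    have hz : HasDerivAt z (x - y) s := AffineMap.hasDerivAt_lineMap
    have hlog := fun m => (hasDerivAt_pi.1 hz m).log (hzs m).ne'
    exact ((hasDerivAt_apply_div_apply hφ hhom hz hzs i).sub
      (hasDerivAt_apply_div_apply hφ hhom hz hzs j)).sub (((hlog i).sub (hlog j)).const_mul α)
  have hΦ' : ∀ s ∈ Icc (0 : ℝ) 1,
      pairDrift (conjJacobian n φ (z s)) (w s) i j - α * (w s i - w s j) ≤ 0 := by
    intro s hs
    have hw : ∀ k l, x k / y k ≤ x l / y l → w s k ≤ w s l := fun k l h => by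
      have hzs : ∀ k, 0 < y k + s * (x k - y k) := fun k => hzk s k ▸ hUsub (hzU s hs) k
      simp only [w, Pi.sub_apply, hzk]
      exact sub_div_add_mul_sub_le_of_div_le (hUsub hy k) (hUsub hy l) (hzs k) (hzs l) h
    have hdrift := pairDrift_le_hMat_mul (A := conjJacobian n φ (z s))
      (fun k => hw k i (hi k)) (fun k => hw j k (hj k))
    nlinarith [hα (z s) (hzU s hs), sub_nonneg.2 (hw j i (hj i))]
  have hanti : AntitoneOn Φ (Icc 0 1) :=
    antitoneOn_of_hasDerivWithinAt_nonpos (convex_Icc 0 1)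
      (fun s hs => (hΦ s hs).continuousAt.continuousWithinAt)
      (fun s hs => (hΦ s (interior_subset hs)).hasDerivWithinAt)
      (fun s hs => hΦ' s (interior_subset hs))
  have h10 := hanti (left_mem_Icc.2 zero_le_one) (right_mem_Icc.2 zero_le_one) zero_le_one
  simp only [Φ, z, AffineMap.lineMap_apply_zero, AffineMap.lineMap_apply_one] at h10
  rw [hilbertGap]
  linarith

end Segment

lemma eventually_slope_lt_of_lt {g : ℝ → ℝ} {s c : ℝ} (hg : ContinuousAt g s) (hs : g s < c)
    (r : ℝ) : ∀ᶠ z in 𝓝[>] s, (z - s)⁻¹ * (g z - c) < r := by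
  have hnum : Tendsto (fun z => g z - c) (𝓝[>] s) (𝓝 (g s - c)) :=
    (hg.tendsto.sub_const c).mono_left nhdsWithin_le_nhds
  have hsub : Tendsto (fun z => z - s) (𝓝[>] s) (𝓝[>] 0) :=
    tendsto_nhdsWithin_of_tendsto_nhds_of_eventually_within _
      (((continuous_sub_right s).tendsto' s 0 (sub_self s)).mono_left nhdsWithin_le_nhds)
      (eventually_nhdsWithin_of_forall fun _ hz => sub_pos.2 (mem_Ioi.1 hz))
  filter_upwards [(hnum.neg_mul_atTop (sub_neg.2 hs)
    (tendsto_inv_nhdsGT_zero.comp hsub)).eventually (eventually_lt_atBot r)] with z hz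
  rwa [mul_comm]

theorem le_exp_mul_of_isGreatest_of_deriv_le {ι : Type*} [Finite ι] {g g' : ι → ℝ → ℝ}
    {F : ℝ → ℝ} {K a b : ℝ} (hab : a ≤ b)
    (hg : ∀ p, ∀ s ∈ Icc a b, HasDerivAt (g p) (g' p s) s)
    (hF : ∀ s ∈ Icc a b, IsGreatest (range fun p => g p s) (F s))
    (hg' : ∀ s ∈ Ico a b, ∀ p, g p s = F s → g' p s ≤ K * F s) :
    F b ≤ Real.exp (K * (b - a)) * F a := by
  have : Nonempty ι := let ⟨p, _⟩ := (hF a ⟨le_rfl, hab⟩).1; ⟨p⟩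
  have : Fintype ι := Fintype.ofFinite ι
  have hFsup : EqOn (fun s => Finset.univ.sup' Finset.univ_nonempty fun p => g p s) F (Icc a b) :=
    fun s hs => le_antisymm (Finset.sup'_le _ _ fun p _ => (hF s hs).2 ⟨p, rfl⟩)
      (let ⟨p, hp⟩ := (hF s hs).1; hp ▸ Finset.le_sup' (fun p => g p s) (Finset.mem_univ p))
  have hFcont : ContinuousOn F (Icc a b) :=
    (ContinuousOn.finset_sup'_apply _ fun p _ s hs =>
      (hg p s hs).continuousAt.continuousWithinAt).congr hFsup.symm
  have hslope : ∀ s ∈ Ico a b, ∀ r, K * F s < r →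
      ∃ᶠ z in 𝓝[>] s, (z - s)⁻¹ * (F z - F s) < r := by
    intro s hs r hr
    have hsI : s ∈ Icc a b := Ico_subset_Icc_self hs
    have hev : ∀ p, ∀ᶠ z in 𝓝[>] s, (z - s)⁻¹ * (g p z - F s) < r := fun p => by
      rcases ((hF s hsI).2 ⟨p, rfl⟩).lt_or_eq with hlt | heq
      · exact eventually_slope_lt_of_lt (hg p s hsI).continuousAt hlt r
      · filter_upwards [(hg p s hsI).hasDerivWithinAt.limsup_slope_le' (lt_irrefl s)
          ((hg' s hs p heq).trans_lt hr)] with z hz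
        rwa [slope_def_module, smul_eq_mul, show g p s = F s from heq] at hz
    refine (((eventually_all.2 hev).and (Ioc_mem_nhdsGT hs.2)).mono fun z hz => ?_).frequently
    obtain ⟨p, hp⟩ := (hF z ⟨hs.1.trans hz.2.1.le, hz.2.2⟩).1
    exact hp ▸ hz.1 p
  have := le_gronwallBound_of_liminf_deriv_right_le hFcont hslope le_rfl
    (fun s _ => (add_zero _).ge) b ⟨hab, le_rfl⟩
  rwa [gronwallBound_ε0, mul_comm] at this

structure IsLocalFlowOn {E : Type*} [NormedAddCommGroup E] [NormedSpace ℝ E] (φ : E → E)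
    (U : Set E) (M : ℝ → E → E) (τ : E → ℝ≥0∞) : Prop where
  map_zero : ∀ x ∈ U, M 0 x = x
  hasDerivAt : ∀ x ∈ U, ∀ t : ℝ, 0 ≤ t → ENNReal.ofReal t < τ x →
    HasDerivAt (fun s => M s x) (φ (M t x)) t
  mapsTo : ∀ x ∈ U, ∀ t : ℝ, 0 ≤ t → ENNReal.ofReal t < τ x → M t x ∈ U

lemma exitTime_pos {E : Type*} [NormedAddCommGroup E] [NormedSpace ℝ E] [CompleteSpace E]
    {φ : E → E} {U : Set E} {τ : E → ℝ≥0∞} {x : E} (hφ : ContDiffAt ℝ 1 φ x) (hU : IsOpen U)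
    (hx : x ∈ U)
    (hτ : ∀ (γ : ℝ → E) (s : ℝ≥0∞), γ 0 = x →
      (∀ t : ℝ, 0 ≤ t → ENNReal.ofReal t < s → HasDerivAt γ (φ (γ t)) t ∧ γ t ∈ U) → s ≤ τ x) :
    0 < τ x := by
  obtain ⟨γ, hγ0, ε, hε, hγ⟩ :=
    hφ.exists_forall_mem_closedBall_exists_eq_forall_mem_Ioo_hasDerivAt₀ 0
  have hγd : ∀ᶠ t in 𝓝 0, HasDerivAt γ (φ (γ t)) t :=
    eventually_of_mem (Ioo_mem_nhds (by linarith) (by linarith)) hγ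
  have hγU : ∀ᶠ t in 𝓝 0, γ t ∈ U :=
    hγd.self_of_nhds.continuousAt.preimage_mem_nhds (hU.mem_nhds (hγ0 ▸ hx))
  obtain ⟨δ, hδ, hball⟩ := Metric.eventually_nhds_iff.1 (hγd.and hγU)
  refine (ENNReal.ofReal_pos.2 hδ).trans_le (hτ γ _ hγ0 fun t ht htδ => hball ?_)
  rw [Real.dist_eq, sub_zero, abs_of_nonneg ht]
  exact (ENNReal.ofReal_lt_ofReal_iff hδ).1 htδ

lemma HasDerivAt.le_of_eventually_le {f g : ℝ → ℝ} {f' g' a : ℝ} (hf : HasDerivAt f f' a)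
    (hg : HasDerivAt g g' a) (ha : f a = g a) (hle : ∀ᶠ s in 𝓝[>] a, f s ≤ g s) : f' ≤ g' :=
  le_of_tendsto_of_tendsto ((hasDerivAt_iff_tendsto_slope.1 hf).mono_left (nhdsGT_le_nhdsNE a))
    ((hasDerivAt_iff_tendsto_slope.1 hg).mono_left (nhdsGT_le_nhdsNE a))
    ((hle.and self_mem_nhdsWithin).mono fun s hs => by
      rw [slope_def_field, slope_def_field, ha]
      exact div_le_div_of_nonneg_right (sub_le_sub_right hs.1 _) (sub_pos.2 hs.2).le)

namespace IsLocalFlowOn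

variable {n : ℕ} {φ : (Fin n → ℝ) → Fin n → ℝ} {U : Set (Fin n → ℝ)}
  {M : ℝ → (Fin n → ℝ) → Fin n → ℝ} {τ : (Fin n → ℝ) → ℝ≥0∞}

lemma hilbertDistRn_le [NeZero n] (hflow : IsLocalFlowOn φ U M τ)
    (hφ : ContDiffOn ℝ 1 φ (posOrthant n))
    (hhom : ∀ l : ℝ, 0 < l → ∀ x ∈ posOrthant n, φ (l • x) = l • φ x)
    (hUconv : Convex ℝ U) (hUsub : U ⊆ posOrthant n) {α : ℝ}
    (hα : ∀ z ∈ U, hMat n (conjJacobian n φ z) ≤ α) {x y : Fin n → ℝ} (hx : x ∈ U) (hy : y ∈ U)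
    {t : ℝ} (ht : 0 ≤ t) (htτ : ENNReal.ofReal t < min (τ x) (τ y)) :
    hilbertDistRn n (M t x) (M t y) ≤ Real.exp (α * t) * hilbertDistRn n x y := by
  have hτ : ∀ s ∈ Icc 0 t, ENNReal.ofReal s < τ x ∧ ENNReal.ofReal s < τ y := fun s hs =>
    lt_min_iff.1 ((ENNReal.ofReal_le_ofReal hs.2).trans_lt htτ)
  have hxs : ∀ s ∈ Icc 0 t, M s x ∈ U := fun s hs => hflow.mapsTo x hx s hs.1 (hτ s hs).1
  have hys : ∀ s ∈ Icc 0 t, M s y ∈ U := fun s hs => hflow.mapsTo y hy s hs.1 (hτ s hs).2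
  have hgap := le_exp_mul_of_isGreatest_of_deriv_le (F := fun s => hilbertDistRn n (M s x) (M s y))
    (g := fun (p : Fin n × Fin n) s => hilbertGap (M s x) (M s y) p.1 p.2) (K := α) ht
    (fun p s hs => hasDerivAt_hilbertGap (hflow.hasDerivAt x hx s hs.1 (hτ s hs).1)
      (hflow.hasDerivAt y hy s hs.1 (hτ s hs).2) (hUsub (hxs s hs)) (hUsub (hys s hs)) p.1 p.2)
    (fun s hs => ?_) (fun s hs p hp => ?_)
  · simpa [hflow.map_zero x hx, hflow.map_zero y hy] using hgap
  · obtain ⟨i, j, -, -, hd⟩ :=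
      exists_hilbertDistRn_eq_hilbertGap (hUsub (hxs s hs)) (hUsub (hys s hs))
    refine ⟨⟨(i, j), hd.symm⟩, ?_⟩
    rintro _ ⟨p, rfl⟩
    exact hilbertGap_le_hilbertDistRn (hUsub (hxs s hs)) (hUsub (hys s hs)) p.1 p.2
  · have hs' := Ico_subset_Icc_self hs
    obtain ⟨hi, hj⟩ := ratio_le_of_hilbertGap_eq (hUsub (hxs s hs')) (hUsub (hys s hs')) hp
    have := phi_div_sub_le_mul_hilbertGap hφ hhom hUconv hUsub hα (hxs s hs') (hys s hs') hi hj
    rw [hp] at this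
    linarith

lemma phi_div_sub_le_of_contraction (hflow : IsLocalFlowOn φ U M τ) (hτ : ∀ x ∈ U, 0 < τ x)
    (hUsub : U ⊆ posOrthant n) {α : ℝ}
    (hα : ∀ x ∈ U, ∀ y ∈ U, ∀ t : ℝ, 0 ≤ t → ENNReal.ofReal t < min (τ x) (τ y) →
      hilbertDistRn n (M t x) (M t y) ≤ Real.exp (α * t) * hilbertDistRn n x y)
    {x y : Fin n → ℝ} (hx : x ∈ U) (hy : y ∈ U) {i j : Fin n}
    (hgap : hilbertGap x y i j = hilbertDistRn n x y) :
    (φ x i / x i - φ y i / y i) - (φ x j / x j - φ y j / y j) ≤ α * hilbertDistRn n x y := by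
  have hτ0 : ENNReal.ofReal 0 < min (τ x) (τ y) := by simpa using ⟨hτ x hx, hτ y hy⟩
  have hτs : ∀ᶠ s in 𝓝 0, ENNReal.ofReal s < min (τ x) (τ y) :=
    (ENNReal.continuous_ofReal.tendsto 0).eventually (gt_mem_nhds hτ0)
  have hderiv := hasDerivAt_hilbertGap (hflow.hasDerivAt x hx 0 le_rfl (lt_min_iff.1 hτ0).1)
    (hflow.hasDerivAt y hy 0 le_rfl (lt_min_iff.1 hτ0).2)
    (by rw [hflow.map_zero x hx]; exact hUsub hx) (by rw [hflow.map_zero y hy]; exact hUsub hy) i j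
  have hbound : HasDerivAt (fun s => Real.exp (α * s) * hilbertDistRn n x y)
      (α * hilbertDistRn n x y) 0 := by
    simpa using ((hasDerivAt_id 0).const_mul α).exp.mul_const (hilbertDistRn n x y)
  simp only [hflow.map_zero x hx, hflow.map_zero y hy] at hderiv
  refine hderiv.le_of_eventually_le hbound
    (by simp [hflow.map_zero x hx, hflow.map_zero y hy, hgap]) ?_
  filter_upwards [self_mem_nhdsWithin, nhdsWithin_le_nhds hτs] with s hs hsτ
  have hxs := hUsub (hflow.mapsTo x hx s (le_of_lt hs) (lt_min_iff.1 hsτ).1)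
  have hys := hUsub (hflow.mapsTo y hy s (le_of_lt hs) (lt_min_iff.1 hsτ).2)
  exact (hilbertGap_le_hilbertDistRn hxs hys i j).trans (hα x hx y hy s (le_of_lt hs) hsτ)

-- For `y ε = x * exp (ε c)`, contraction at rate `α` bounds the initial speed `ψ ε` of the gap
-- realising `d_H(x, y ε) = ε` by `α ε`, while `ψ 0 = 0` and `ψ' 0 = -hMatPair`.
lemma hMat_conjJacobian_le_of_contraction (hflow : IsLocalFlowOn φ U M τ)
    (hτ : ∀ x ∈ U, 0 < τ x) (hn : 1 < n) (hφ : ContDiffOn ℝ 1 φ (posOrthant n))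
    (hhom : ∀ l : ℝ, 0 < l → ∀ x ∈ posOrthant n, φ (l • x) = l • φ x)
    (hUopen : IsOpen U) (hUsub : U ⊆ posOrthant n) {α : ℝ}
    (hα : ∀ x ∈ U, ∀ y ∈ U, ∀ t : ℝ, 0 ≤ t → ENNReal.ofReal t < min (τ x) (τ y) →
      hilbertDistRn n (M t x) (M t y) ≤ Real.exp (α * t) * hilbertDistRn n x y)
    {x : Fin n → ℝ} (hx : x ∈ U) : hMat n (conjJacobian n φ x) ≤ α := by
  refine hMat_le_of_forall_neg_hMatPair_le hn fun i j hij => ?_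
  obtain ⟨c, hc, hci, hcj, hdrift⟩ := exists_pairDrift_eq_neg_hMatPair (conjJacobian n φ x) hij
  set y : ℝ → Fin n → ℝ := fun ε k => x k * Real.exp (ε * c k)
  have hy0 : y 0 = x := by funext k; simp [y]
  have hyd : HasDerivAt y (fun k => x k * c k) 0 := hasDerivAt_pi.2 fun k => by
    simpa using ((hasDerivAt_id (0 : ℝ)).mul_const (c k)).exp.const_mul (x k)
  have hyU : ∀ᶠ ε in 𝓝 0, y ε ∈ U :=
    hyd.continuousAt.preimage_mem_nhds (hUopen.mem_nhds (by rwa [hy0]))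
  set ψ : ℝ → ℝ := fun ε =>
    (φ x j / x j - φ (y ε) j / y ε j) - (φ x i / x i - φ (y ε) i / y ε i)
  have hψ : HasDerivAt ψ (-hMatPair (conjJacobian n φ x) i j) 0 := by
    have hdiv := hasDerivAt_apply_div_apply hφ hhom hyd (by rw [hy0]; exact hUsub hx)
    refine (((hasDerivAt_const 0 _).sub (hdiv j)).sub
      ((hasDerivAt_const 0 _).sub (hdiv i))).congr_deriv ?_
    rw [← hdrift, pairDrift, hy0]
    simp only [mul_div_cancel_left₀ _ (hUsub hx _).ne']
    ring
  have hψα : ∀ᶠ ε in 𝓝[>] 0, ψ ε ≤ α * ε := by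
    filter_upwards [self_mem_nhdsWithin, nhdsWithin_le_nhds hyU] with ε hε hεU
    obtain ⟨hgap, hdist⟩ := hilbertDistRn_mul_exp (hUsub hx) hc hci hcj (le_of_lt hε)
    have := hflow.phi_div_sub_le_of_contraction hτ hUsub hα hx hεU (hgap.trans hdist.symm)
    rwa [hdist] at this
  exact hψ.le_of_eventually_le (by simpa using (hasDerivAt_id (0 : ℝ)).const_mul α)
    (by simp [ψ, hy0]) hψα

end IsLocalFlowOn

lemma Real.sInf_upperBounds_eq_sSup (s : Set ℝ) : sInf (upperBounds s) = sSup s := by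
  rcases s.eq_empty_or_nonempty with rfl | hne
  · rw [upperBounds_empty, Real.sSup_empty, Real.sInf_of_not_bddBelow not_bddBelow_univ]
  by_cases hbdd : BddAbove s
  · exact csInf_upperBounds_eq_csSup hbdd hne
  · rw [Real.sSup_of_not_bddAbove hbdd, not_nonempty_iff_eq_empty.1 hbdd, Real.sInf_empty]

theorem nonlinear_flow_hilbert_contraction_rate_Rn_general (n : ℕ) (hn : 1 < n)
    (φ : (Fin n → ℝ) → Fin n → ℝ) (hφ : ContDiffOn ℝ 1 φ (posOrthant n))
    (hhom : ∀ l : ℝ, 0 < l → ∀ x ∈ posOrthant n, φ (l • x) = l • φ x)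
    (U : Set (Fin n → ℝ)) (hUopen : IsOpen U) (hUconv : Convex ℝ U)
    (hUsub : U ⊆ posOrthant n)
    (M : ℝ → (Fin n → ℝ) → Fin n → ℝ) (τ : (Fin n → ℝ) → ℝ≥0∞)
    (hM0 : ∀ x ∈ U, M 0 x = x)
    (hMder : ∀ x ∈ U, ∀ t : ℝ, 0 ≤ t → ENNReal.ofReal t < τ x →
        HasDerivAt (fun s : ℝ => M s x) (φ (M t x)) t)
    (hMmem : ∀ x ∈ U, ∀ t : ℝ, 0 ≤ t → ENNReal.ofReal t < τ x → M t x ∈ U)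
    (hτmax : ∀ x ∈ U, ∀ (γ : ℝ → Fin n → ℝ) (s : ℝ≥0∞), γ 0 = x →
        (∀ t : ℝ, 0 ≤ t → ENNReal.ofReal t < s → HasDerivAt γ (φ (γ t)) t ∧ γ t ∈ U) →
        s ≤ τ x) :
    sInf {α : ℝ | ∀ x ∈ U, ∀ y ∈ U, ∀ t : ℝ, 0 ≤ t → ENNReal.ofReal t < min (τ x) (τ y) →
        hilbertDistRn n (M t x) (M t y) ≤ Real.exp (α * t) * hilbertDistRn n x y} =
      sSup {r : ℝ | ∃ x ∈ U, r = hMat n (conjJacobian n φ x)} := by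
  have : NeZero n := ⟨by omega⟩
  have hflow : IsLocalFlowOn φ U M τ := ⟨hM0, hMder, hMmem⟩
  have hτ : ∀ x ∈ U, 0 < τ x := fun x hx =>
    exitTime_pos (hφ.contDiffAt (isOpen_posOrthant.mem_nhds (hUsub hx))) hUopen hx (hτmax x hx)
  rw [← Real.sInf_upperBounds_eq_sSup]
  congr 1
  ext α
  refine ⟨fun hα _ ⟨x, hx, hr⟩ => hr ▸
      hflow.hMat_conjJacobian_le_of_contraction hτ hn hφ hhom hUopen hUsub hα hx,
    fun hα x hx y hy t ht htτ => hflow.hilbertDistRn_le hφ hhom hUconv hUsub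
      (fun z hz => hα ⟨z, hz, rfl⟩) hx hy ht htτ⟩

theorem nonlinear_flow_hilbert_contraction_rate_Rn (n : ℕ) (hn : 1 < n)
    (φ : (Fin n → ℝ) → Fin n → ℝ) (hφ : ContDiffOn ℝ 1 φ (posOrthant n))
    (hhom : ∀ l : ℝ, 0 < l → ∀ x ∈ posOrthant n, φ (l • x) = l • φ x)
    (U : Set (Fin n → ℝ)) (hUopen : IsOpen U) (hUconv : Convex ℝ U)
    (hUsub : U ⊆ posOrthant n) (hUcone : ∀ l : ℝ, 0 < l → l • U = U)
    (M : ℝ → (Fin n → ℝ) → Fin n → ℝ) (τ : (Fin n → ℝ) → ℝ≥0∞)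
    (hM0 : ∀ x ∈ U, M 0 x = x)
    (hMder : ∀ x ∈ U, ∀ t : ℝ, 0 ≤ t → ENNReal.ofReal t < τ x →
        HasDerivAt (fun s : ℝ => M s x) (φ (M t x)) t)
    (hMmem : ∀ x ∈ U, ∀ t : ℝ, 0 ≤ t → ENNReal.ofReal t < τ x → M t x ∈ U)
    (hτmax : ∀ x ∈ U, ∀ (γ : ℝ → Fin n → ℝ) (s : ℝ≥0∞), γ 0 = x →
        (∀ t : ℝ, 0 ≤ t → ENNReal.ofReal t < s → HasDerivAt γ (φ (γ t)) t ∧ γ t ∈ U) →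
        s ≤ τ x) :
    sInf {α : ℝ | ∀ x ∈ U, ∀ y ∈ U, ∀ t : ℝ, 0 ≤ t → ENNReal.ofReal t < min (τ x) (τ y) →
        hilbertDistRn n (M t x) (M t y) ≤ Real.exp (α * t) * hilbertDistRn n x y} =
      sSup {r : ℝ | ∃ x ∈ U, r = hMat n (conjJacobian n φ x)} :=
  nonlinear_flow_hilbert_contraction_rate_Rn_general n hn φ hφ hhom U hUopen hUconv hUsub M τ hM0
    hMder hMmem hτmax
end
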